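/- arXiv:2111.03173 — 2 statements merged into one kernel-verified Lean document; each statement's English description precedes it below -/
import Mathlib

section
/- Let V be a symmetric positive definite m×m real matrix, B ∈ R^m, and 1 the all-ones vector. Then the minimization of AMSE(ω) = (ωᵀB)² + ωᵀVω over ω ∈ R^m subject to ωᵀ1 = 1 has a unique solution ω* = [(1 + BᵀV⁻¹B) V⁻¹1 − (1ᵀV⁻¹B) V⁻¹B] / [(1 + BᵀV⁻¹B)(1ᵀV⁻¹1) − (1ᵀV⁻¹B)²], and the denominator (1 + BᵀV⁻¹B)(1ᵀV⁻¹1) − (1ᵀV⁻¹B)² is strictly positive. -/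
/-!
Writing `Q = V + BBᵀ`, the objective is the quadratic form `ωᵀQω`, and `Q` is positive definite.
If `Qω*` is a multiple of `1` and `ω*ᵀ1 = 1`, then for every `δ` with `δᵀ1 = 0` the cross term
`δᵀQω*` vanishes, so `(ω* + δ)ᵀQ(ω* + δ) = ω*ᵀQω* + δᵀQδ`, which makes `ω*` the unique
constrained minimiser. By the Sherman–Morrison computation, `z = (1 + BᵀV⁻¹B) V⁻¹1 − (1ᵀV⁻¹B) V⁻¹B`
satisfies `Qz = (1 + BᵀV⁻¹B) 1`; the denominator is `zᵀ1`, and it is positive because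
`0 < zᵀQz = (1 + BᵀV⁻¹B) zᵀ1`.
-/

open Matrix

namespace Matrix

variable {n : Type*} [Fintype n]

theorem IsSymm.dotProduct_mulVec_comm {R : Type*} [CommSemiring R] {Q : Matrix n n R}
    (hQ : Q.IsSymm) (x y : n → R) : x ⬝ᵥ Q *ᵥ y = y ⬝ᵥ Q *ᵥ x := by
  rw [dotProduct_mulVec, ← mulVec_transpose, hQ.eq, dotProduct_comm]

theorem dotProduct_add_vecMulVec_self_mulVec {R : Type*} [CommRing R]
    (V : Matrix n n R) (B ω : n → R) :
    ω ⬝ᵥ (V + vecMulVec B B) *ᵥ ω = (ω ⬝ᵥ B) ^ 2 + ω ⬝ᵥ V *ᵥ ω := by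
  rw [add_mulVec, dotProduct_add, vecMulVec_mulVec]
  simp only [op_smul_eq_smul, dotProduct_smul, smul_eq_mul, dotProduct_comm B ω]
  ring

theorem PosDef.add_vecMulVec_self {V : Matrix n n ℝ} (hV : V.PosDef) (B : n → ℝ) :
    (V + vecMulVec B B).PosDef :=
  hV.add_posSemidef (by simpa using posSemidef_vecMulVec_self_star B)

theorem IsHermitian.dotProduct_add_mulVec_add {Q : Matrix n n ℝ} (hQ : Q.IsHermitian)
    {x c δ : n → ℝ} {μ : ℝ} (hx : Q *ᵥ x = μ • c) (hδ : δ ⬝ᵥ c = 0) :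
    (x + δ) ⬝ᵥ Q *ᵥ (x + δ) = x ⬝ᵥ Q *ᵥ x + δ ⬝ᵥ Q *ᵥ δ := by
  have hQδx : x ⬝ᵥ Q *ᵥ δ = δ ⬝ᵥ Q *ᵥ x :=
    (isHermitian_iff_isSymm.mp hQ).dotProduct_mulVec_comm x δ
  have hcross : δ ⬝ᵥ Q *ᵥ x = 0 := by rw [hx, dotProduct_smul, hδ, smul_zero]
  simp only [mulVec_add, dotProduct_add, add_dotProduct, hQδx, hcross]
  ring

theorem PosDef.dotProduct_mulVec_lt_of_mulVec_eq_smul {Q : Matrix n n ℝ} (hQ : Q.PosDef)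
    {x c y : n → ℝ} {μ : ℝ} (hx : Q *ᵥ x = μ • c) (hxc : x ⬝ᵥ c = 1) (hyc : y ⬝ᵥ c = 1)
    (hyx : y ≠ x) : x ⬝ᵥ Q *ᵥ x < y ⬝ᵥ Q *ᵥ y := by
  have hδ : (y - x) ⬝ᵥ c = 0 := by rw [sub_dotProduct, hxc, hyc, sub_self]
  have hpos : 0 < (y - x) ⬝ᵥ Q *ᵥ (y - x) := by
    simpa using hQ.dotProduct_mulVec_pos (sub_ne_zero.mpr hyx)
  have := hQ.isHermitian.dotProduct_add_mulVec_add hx hδ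
  rw [add_sub_cancel] at this
  linarith

theorem PosDef.dotProduct_pos_of_mulVec_eq_smul {Q : Matrix n n ℝ} (hQ : Q.PosDef)
    {z c : n → ℝ} {μ : ℝ} (hz : Q *ᵥ z = μ • c) (hμ : 0 < μ) (hc : c ≠ 0) : 0 < z ⬝ᵥ c := by
  have hz0 : z ≠ 0 := by
    rintro rfl
    rw [mulVec_zero, eq_comm, smul_eq_zero] at hz
    exact hz.elim hμ.ne' hc
  have hpos : 0 < z ⬝ᵥ Q *ᵥ z := by simpa using hQ.dotProduct_mulVec_pos hz0
  rw [hz, dotProduct_smul, smul_eq_mul] at hpos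
  exact pos_of_mul_pos_right hpos hμ.le

theorem IsHermitian.add_vecMulVec_self_mulVec_eq_smul [DecidableEq n]
    {V : Matrix n n ℝ} (hV : V.IsHermitian) (hdet : IsUnit V.det) (B c : n → ℝ) :
    (V + vecMulVec B B) *ᵥ
        ((1 + B ⬝ᵥ V⁻¹ *ᵥ B) • V⁻¹ *ᵥ c - (c ⬝ᵥ V⁻¹ *ᵥ B) • V⁻¹ *ᵥ B) =
      (1 + B ⬝ᵥ V⁻¹ *ᵥ B) • c := by
  have hVV (x : n → ℝ) : V *ᵥ V⁻¹ *ᵥ x = x := by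
    rw [mulVec_mulVec, mul_nonsing_inv _ hdet, one_mulVec]
  have hsymm : B ⬝ᵥ V⁻¹ *ᵥ c = c ⬝ᵥ V⁻¹ *ᵥ B :=
    (isHermitian_iff_isSymm.mp hV.inv).dotProduct_mulVec_comm B c
  rw [add_mulVec, vecMulVec_mulVec]
  simp only [mulVec_sub, mulVec_smul, hVV, op_smul_eq_smul, dotProduct_sub, dotProduct_smul,
    smul_eq_mul, hsymm]
  module

end Matrix

/-- AMSE minimization subject to `ωᵀ1 = 1` has the stated unique solution, and
the denominator `(1 + BᵀV⁻¹B)(1ᵀV⁻¹1) − (1ᵀV⁻¹B)²` is strictly positive. -/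
theorem stmt_1 (m : ℕ) (hm : 0 < m) (V : Matrix (Fin m) (Fin m) ℝ) (hV : V.PosDef)
    (B : Fin m → ℝ) :
    let one : Fin m → ℝ := fun _ => 1
    let D : ℝ := (1 + B ⬝ᵥ V⁻¹.mulVec B) * (one ⬝ᵥ V⁻¹.mulVec one) - (one ⬝ᵥ V⁻¹.mulVec B) ^ 2
    let ωstar : Fin m → ℝ :=
      D⁻¹ • ((1 + B ⬝ᵥ V⁻¹.mulVec B) • V⁻¹.mulVec one - (one ⬝ᵥ V⁻¹.mulVec B) • V⁻¹.mulVec B)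
    0 < D ∧
    ωstar ⬝ᵥ one = 1 ∧
    (∀ ω : Fin m → ℝ, ω ⬝ᵥ one = 1 →
      (ωstar ⬝ᵥ B) ^ 2 + ωstar ⬝ᵥ V.mulVec ωstar ≤ (ω ⬝ᵥ B) ^ 2 + ω ⬝ᵥ V.mulVec ω ∧
      ((ω ⬝ᵥ B) ^ 2 + ω ⬝ᵥ V.mulVec ω = (ωstar ⬝ᵥ B) ^ 2 + ωstar ⬝ᵥ V.mulVec ωstar →
        ω = ωstar)) := by
  intro one D ωstar
  have hQ : (V + vecMulVec B B).PosDef := hV.add_vecMulVec_self B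
  have hb : 0 ≤ B ⬝ᵥ V⁻¹ *ᵥ B := by simpa using hV.inv.posSemidef.dotProduct_mulVec_nonneg B
  have hone : one ≠ 0 := fun h => by simpa [one] using congrFun h ⟨0, hm⟩
  set z := (1 + B ⬝ᵥ V⁻¹ *ᵥ B) • V⁻¹ *ᵥ one - (one ⬝ᵥ V⁻¹ *ᵥ B) • V⁻¹ *ᵥ B
  have hQz : (V + vecMulVec B B) *ᵥ z = (1 + B ⬝ᵥ V⁻¹ *ᵥ B) • one :=
    hV.isHermitian.add_vecMulVec_self_mulVec_eq_smul hV.det_pos.ne'.isUnit B one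
  have hzD : z ⬝ᵥ one = D := by
    rw [dotProduct_comm, dotProduct_sub, dotProduct_smul, dotProduct_smul, smul_eq_mul,
      smul_eq_mul]
    ring
  have hD : 0 < D := hzD ▸ hQ.dotProduct_pos_of_mulVec_eq_smul hQz (by linarith) hone
  have hωone : ωstar ⬝ᵥ one = 1 := by
    rw [smul_dotProduct, hzD, smul_eq_mul, inv_mul_cancel₀ hD.ne']
  have hQω : (V + vecMulVec B B) *ᵥ ωstar = (D⁻¹ * (1 + B ⬝ᵥ V⁻¹ *ᵥ B)) • one := by
    rw [mulVec_smul, hQz, smul_smul]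
  refine ⟨hD, hωone, fun ω hω => ?_⟩
  have hlt (hne : ω ≠ ωstar) := hQ.dotProduct_mulVec_lt_of_mulVec_eq_smul hQω hωone hω hne
  rw [← dotProduct_add_vecMulVec_self_mulVec V B ω,
    ← dotProduct_add_vecMulVec_self_mulVec V B ωstar]
  constructor
  · rcases eq_or_ne ω ωstar with rfl | hne
    · exact le_rfl
    · exact (hlt hne).le
  · intro heq
    by_contra hne
    exact (hlt hne).ne' heq
end

section
/- Let γ > 0, ρ < 0, λ ∈ R, m ≥ 2, and c₁,…,c_m > 0, d₁,…,d_m > 0 with Σⱼ dⱼ/cⱼ = Σⱼ 1/cⱼ normalized so that the dⱼ are not all equal to 1. Define B = (λ/(1−ρ))(d₁^ρ,…,d_m^ρ)ᵀ and V = γ²(Σᵢ 1/cᵢ)·diag(c₁,…,c_m), and S_α = Σⱼ dⱼ^α/cⱼ for α ∈ {0, ρ, 2ρ}, with the normalization S₁ = S₀ (i.e. Σⱼ dⱼ/cⱼ = Σⱼ 1/cⱼ). Then the minimal constrained AMSE, min_{ωᵀ1=1} [(ωᵀB)² + ωᵀVω] = (1 + BᵀV⁻¹B)/[(1 + BᵀV⁻¹B)(1ᵀV⁻¹1)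 − (1ᵀV⁻¹B)²], satisfies the inequality min AMSE ≥ λ²/(1−ρ)² + γ² if and only if |λ| ≤ λ₀ := γ(1−ρ)√((S_ρ² − S₀²)/(S₀S_{2ρ} − S_ρ²)), where it is additionally asserted that S_ρ² > S₀² (given S₁ = S₀ and dⱼ not all 1) and S₀S_{2ρ} > S_ρ² (strict Cauchy–Schwarz). -/
/-!
With weights `1 / cⱼ`, the normalization says that the `dⱼ` have weighted mean `1`. The tangent
line of the strictly convex map `x ↦ x ^ ρ` at `1` lies below it, so `S₀ < S_ρ`; strict
Cauchy–Schwarz for the non-constant vector `(dⱼ ^ ρ)` gives `S_ρ² < S₀ S_{2ρ}`. Since `V` is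
diagonal, the three quadratic forms are explicit in `S₀, S_ρ, S_{2ρ}`, and comparing the minimal
AMSE with the benchmark reduces to `a² (a² (S₀ S_{2ρ} - S_ρ²) - γ² (S_ρ² - S₀²)) ≤ 0` for
`a = λ / (1 - ρ)`.
-/

open Matrix Finset

lemma one_add_mul_sub_one_le_rpow {ρ x : ℝ} (hρ : ρ ≤ 0) (hx : 0 < x) :
    1 + ρ * (x - 1) ≤ x ^ ρ := by
  have hlog : ρ * (x - 1) ≤ ρ * Real.log x :=
    mul_le_mul_of_nonpos_left (Real.log_le_sub_one_of_pos hx) hρ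
  rw [Real.rpow_def_of_pos hx]
  linarith [Real.add_one_le_exp (Real.log x * ρ)]

lemma one_add_mul_sub_one_lt_rpow {ρ x : ℝ} (hρ : ρ < 0) (hx : 0 < x) (hx1 : x ≠ 1) :
    1 + ρ * (x - 1) < x ^ ρ := by
  have hlog : ρ * (x - 1) ≤ ρ * Real.log x :=
    mul_le_mul_of_nonpos_left (Real.log_le_sub_one_of_pos hx) hρ.le
  have hne : Real.log x * ρ ≠ 0 :=
    mul_ne_zero (Real.log_ne_zero_of_pos_of_ne_one hx hx1) hρ.ne
  rw [Real.rpow_def_of_pos hx]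
  linarith [Real.add_one_lt_exp hne]

variable {ι : Type*}

lemma sum_one_div_lt_sum_rpow_div {s : Finset ι} {c x : ι → ℝ} {ρ : ℝ} (hρ : ρ < 0)
    (hc : ∀ i ∈ s, 0 < c i) (hx : ∀ i ∈ s, 0 < x i)
    (hmean : ∑ i ∈ s, x i / c i = ∑ i ∈ s, 1 / c i) (hx1 : ∃ i ∈ s, x i ≠ 1) :
    ∑ i ∈ s, 1 / c i < ∑ i ∈ s, x i ^ ρ / c i := by
  have htangent : ∑ i ∈ s, (1 + ρ * (x i - 1)) / c i = ∑ i ∈ s, 1 / c i := by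
    have h : ∀ i ∈ s, (1 + ρ * (x i - 1)) / c i = 1 / c i + ρ * (x i / c i - 1 / c i) :=
      fun i _ => by ring
    rw [sum_congr rfl h, sum_add_distrib, ← mul_sum, sum_sub_distrib, hmean, sub_self,
      mul_zero, add_zero]
  rw [← htangent]
  obtain ⟨i₀, hi₀, hxi₀⟩ := hx1
  refine sum_lt_sum (fun i hi => ?_) ⟨i₀, hi₀, ?_⟩
  · exact div_le_div_of_nonneg_right (one_add_mul_sub_one_le_rpow hρ.le (hx i hi)) (hc i hi).le
  · exact div_lt_div_of_pos_right (one_add_mul_sub_one_lt_rpow hρ (hx i₀ hi₀) hxi₀) (hc i₀ hi₀)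

lemma sq_sum_div_lt_sum_one_div_mul_sum_sq_div {s : Finset ι} {c y : ι → ℝ}
    (hc : ∀ i ∈ s, 0 < c i) (hy : ∃ i ∈ s, ∃ j ∈ s, y i ≠ y j) :
    (∑ i ∈ s, y i / c i) ^ 2 < (∑ i ∈ s, 1 / c i) * ∑ i ∈ s, y i ^ 2 / c i := by
  obtain ⟨i, hi, j, hj, hij⟩ := hy
  set P := ∑ i ∈ s, 1 / c i
  set Q := ∑ i ∈ s, y i / c i
  set R := ∑ i ∈ s, y i ^ 2 / c i
  have hP : 0 < P := sum_pos (fun k hk => one_div_pos.mpr (hc k hk)) ⟨i, hi⟩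
  have hexpand (t : ℝ) : ∑ k ∈ s, (y k - t) ^ 2 / c k = R - 2 * t * Q + t ^ 2 * P := by
    rw [mul_sum, mul_sum, ← sum_sub_distrib, ← sum_add_distrib]
    exact sum_congr rfl fun k _ => by ring
  have hspread : 0 < ∑ k ∈ s, (y k - Q / P) ^ 2 / c k := by
    obtain ⟨k, hk, hkt⟩ : ∃ k ∈ s, y k ≠ Q / P := by
      by_contra! h
      exact hij ((h i hi).trans (h j hj).symm)
    refine sum_pos' (fun k hk => div_nonneg (sq_nonneg _) (hc k hk).le) ⟨k, hk, ?_⟩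
    exact div_pos (sq_pos_of_ne_zero (sub_ne_zero.mpr hkt)) (hc k hk)
  have hgap : P * (R - 2 * (Q / P) * Q + (Q / P) ^ 2 * P) = P * R - Q ^ 2 := by
    field_simp
    ring
  rw [hexpand] at hspread
  nlinarith [mul_pos hP hspread]

lemma exists_ne_of_sum_div_eq_sum_one_div {s : Finset ι} {c x : ι → ℝ} (hc : ∀ i ∈ s, 0 < c i)
    (hmean : ∑ i ∈ s, x i / c i = ∑ i ∈ s, 1 / c i) (hx1 : ∃ i ∈ s, x i ≠ 1) :
    ∃ i ∈ s, ∃ j ∈ s, x i ≠ x j := by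
  obtain ⟨i₀, hi₀, hxi₀⟩ := hx1
  by_contra! hconst
  have hP : 0 < ∑ i ∈ s, 1 / c i := sum_pos (fun i hi => one_div_pos.mpr (hc i hi)) ⟨i₀, hi₀⟩
  have hscale : ∑ i ∈ s, x i / c i = x i₀ * ∑ i ∈ s, 1 / c i := by
    rw [mul_sum]
    exact sum_congr rfl fun i hi => by rw [hconst i hi i₀ hi₀]; ring
  rw [hscale] at hmean
  exact hxi₀ ((mul_eq_right₀ hP.ne').mp hmean)

lemma sq_sum_rpow_div_lt {s : Finset ι} {c d : ι → ℝ} {ρ : ℝ} (hρ : ρ ≠ 0)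
    (hc : ∀ i ∈ s, 0 < c i) (hd : ∀ i ∈ s, 0 < d i) (hne : ∃ i ∈ s, ∃ j ∈ s, d i ≠ d j) :
    (∑ i ∈ s, d i ^ ρ / c i) ^ 2 < (∑ i ∈ s, 1 / c i) * ∑ i ∈ s, d i ^ (2 * ρ) / c i := by
  obtain ⟨i, hi, j, hj, hij⟩ := hne
  have hsq : ∀ k ∈ s, d k ^ (2 * ρ) / c k = (d k ^ ρ) ^ 2 / c k := fun k hk => by
    rw [mul_comm, Real.rpow_mul (hd k hk).le, Real.rpow_two]
  rw [sum_congr rfl hsq]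
  exact sq_sum_div_lt_sum_one_div_mul_sum_sq_div hc
    ⟨i, hi, j, hj, (Real.rpow_left_inj (hd i hi).le (hd j hj).le hρ).not.mpr hij⟩

lemma dotProduct_inv_smul_diagonal_mulVec {K : Type*} [Field K] [Fintype ι] [DecidableEq ι]
    {r : K} {w : ι → K} (hr : r ≠ 0) (hw : ∀ i, w i ≠ 0) (u v : ι → K) :
    u ⬝ᵥ (r • diagonal w)⁻¹ *ᵥ v = (∑ i, u i * v i / w i) / r := by
  have hinv : (r • diagonal w)⁻¹ = diagonal fun i => (r * w i)⁻¹ := by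
    refine inv_eq_left_inv ?_
    rw [← diagonal_smul, diagonal_mul_diagonal, ← diagonal_one]
    exact congrArg diagonal (funext fun i => inv_mul_cancel₀ (mul_ne_zero hr (hw i)))
  simp only [hinv, mulVec_diagonal, dotProduct, sum_div]
  exact sum_congr rfl fun i _ => by field_simp

lemma abs_le_mul_sqrt_iff {x k q : ℝ} (hk : 0 ≤ k) (hq : 0 ≤ q) :
    |x| ≤ k * √q ↔ x ^ 2 ≤ k ^ 2 * q := by
  have hk_sqrt : k * √q = √(k ^ 2 * q) := by rw [Real.sqrt_mul (sq_nonneg k), Real.sqrt_sq hk]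
  rw [hk_sqrt, ← Real.sqrt_sq_eq_abs, Real.sqrt_le_sqrt_iff (by positivity)]

lemma benchmark_le_minAMSE_iff {γ a P Q R : ℝ} (hγ : 0 < γ) (hP : 0 < P) (hPQ : P ^ 2 < Q ^ 2)
    (hCS : Q ^ 2 < P * R) :
    a ^ 2 + γ ^ 2 ≤ (1 + a ^ 2 * R / (γ ^ 2 * P)) /
        ((1 + a ^ 2 * R / (γ ^ 2 * P)) * (P / (γ ^ 2 * P)) - (a * Q / (γ ^ 2 * P)) ^ 2) ↔
      a ^ 2 * (P * R - Q ^ 2) ≤ γ ^ 2 * (Q ^ 2 - P ^ 2) := by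
  set N := γ ^ 2 * P ^ 2 + a ^ 2 * (P * R - Q ^ 2)
  have hN : 0 < N :=
    add_pos_of_pos_of_nonneg (by positivity) (mul_nonneg (sq_nonneg a) (by linarith))
  have hD : (1 + a ^ 2 * R / (γ ^ 2 * P)) * (P / (γ ^ 2 * P)) - (a * Q / (γ ^ 2 * P)) ^ 2 =
      N / (γ ^ 4 * P ^ 2) := by
    field_simp
    ring
  have hgap : 1 + a ^ 2 * R / (γ ^ 2 * P) - (a ^ 2 + γ ^ 2) * (N / (γ ^ 4 * P ^ 2)) =
      a ^ 2 * (γ ^ 2 * (Q ^ 2 - P ^ 2) - a ^ 2 * (P * R - Q ^ 2)) / (γ ^ 4 * P ^ 2) := by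
    field_simp
    ring
  rw [hD, le_div_iff₀ (by positivity), ← sub_nonneg, hgap, le_div_iff₀ (by positivity), zero_mul]
  rcases eq_or_ne a 0 with rfl | ha
  · exact iff_of_true (by simp) (by nlinarith)
  · rw [mul_nonneg_iff_of_pos_left (by positivity), sub_nonneg]

theorem stmt_14_general (m : ℕ) (γ ρ lam : ℝ) (hγ : 0 < γ) (hρ : ρ < 0)
    (c d : Fin m → ℝ) (hc : ∀ j, 0 < c j) (hd : ∀ j, 0 < d j)
    (hnorm : ∑ j, d j / c j = ∑ j, 1 / c j) (hd1 : ¬ ∀ j, d j = 1) :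
    let S : ℝ → ℝ := fun α => ∑ j, d j ^ α / c j
    let B : Fin m → ℝ := fun j => lam / (1 - ρ) * d j ^ ρ
    let V : Matrix (Fin m) (Fin m) ℝ := (γ ^ 2 * ∑ i, 1 / c i) • Matrix.diagonal c
    let one : Fin m → ℝ := fun _ => 1
    let D : ℝ := (1 + B ⬝ᵥ V⁻¹.mulVec B) * (one ⬝ᵥ V⁻¹.mulVec one) - (one ⬝ᵥ V⁻¹.mulVec B) ^ 2
    let minAMSE : ℝ := (1 + B ⬝ᵥ V⁻¹.mulVec B) / D
    let lam₀ : ℝ := γ * (1 - ρ) * Real.sqrt ((S ρ ^ 2 - S 0 ^ 2) / (S 0 * S (2 * ρ) - S ρ ^ 2))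
    S 0 ^ 2 < S ρ ^ 2 ∧
    S ρ ^ 2 < S 0 * S (2 * ρ) ∧
    (lam ^ 2 / (1 - ρ) ^ 2 + γ ^ 2 ≤ minAMSE ↔ |lam| ≤ lam₀) := by
  intro S B V one D minAMSE lam₀
  have hd_ne_one : ∃ j ∈ univ, d j ≠ 1 := by simpa using hd1
  have hS₀ : S 0 = ∑ j, 1 / c j := by simp only [S, Real.rpow_zero]
  have hS₀pos : 0 < S 0 := by
    obtain ⟨j₀, -, -⟩ := hd_ne_one
    exact hS₀ ▸ sum_pos (fun j _ => one_div_pos.mpr (hc j)) ⟨j₀, mem_univ _⟩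
  have hS₀ρ : S 0 < S ρ :=
    hS₀ ▸ sum_one_div_lt_sum_rpow_div hρ (fun j _ => hc j) (fun j _ => hd j) hnorm hd_ne_one
  have hsq (j : Fin m) : d j ^ (2 * ρ) = (d j ^ ρ) ^ 2 := by
    rw [mul_comm, Real.rpow_mul (hd j).le, Real.rpow_two]
  have hCS : S ρ ^ 2 < S 0 * S (2 * ρ) := hS₀ ▸ sq_sum_rpow_div_lt hρ.ne (fun j _ => hc j)
    (fun j _ => hd j) (exists_ne_of_sum_div_eq_sum_one_div (fun j _ => hc j) hnorm hd_ne_one)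
  have hquad (u v : Fin m → ℝ) : u ⬝ᵥ V⁻¹ *ᵥ v = (∑ j, u j * v j / c j) / (γ ^ 2 * S 0) := by
    have hr : γ ^ 2 * S 0 ≠ 0 := by positivity
    rw [hS₀] at hr ⊢
    exact dotProduct_inv_smul_diagonal_mulVec hr (fun j => (hc j).ne') u v
  have hBB : B ⬝ᵥ V⁻¹ *ᵥ B = (lam / (1 - ρ)) ^ 2 * S (2 * ρ) / (γ ^ 2 * S 0) := by
    simp only [hquad, S, B, hsq, mul_sum]
    ring_nf
  have h1B : one ⬝ᵥ V⁻¹ *ᵥ B = lam / (1 - ρ) * S ρ / (γ ^ 2 * S 0) := by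
    simp only [hquad, S, B, one, mul_sum]
    ring_nf
  have h11 : one ⬝ᵥ V⁻¹ *ᵥ one = S 0 / (γ ^ 2 * S 0) := by
    simp only [hquad, hS₀, one, mul_one]
  have hS₀ρ_sq : S 0 ^ 2 < S ρ ^ 2 := pow_lt_pow_left₀ hS₀ρ hS₀pos.le two_ne_zero
  refine ⟨hS₀ρ_sq, hCS, ?_⟩
  have h1ρ : 0 < 1 - ρ := by linarith
  have hgap : 0 < S 0 * S (2 * ρ) - S ρ ^ 2 := sub_pos.mpr hCS
  simp only [minAMSE, D, lam₀]
  rw [hBB, h1B, h11, ← div_pow, benchmark_le_minAMSE_iff hγ hS₀pos hS₀ρ_sq hCS,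
    abs_le_mul_sqrt_iff (by positivity) (div_nonneg (by linarith) hgap.le), mul_pow, div_pow,
    div_mul_eq_mul_div, div_le_iff₀ (by positivity), ← mul_div_assoc, le_div_iff₀ hgap]
  ring_nf

/-- AMSE comparison of the AMSE-optimal distributed estimator with the benchmark
Hill estimator: with `B = (λ/(1−ρ))(d₁^ρ,…,d_m^ρ)ᵀ`, `V = γ²(Σᵢ1/cᵢ)diag(c)`, normalization
`Σⱼ dⱼ/cⱼ = Σⱼ 1/cⱼ` and the `dⱼ` not all 1, one has `S_ρ² > S₀²`, `S₀S_{2ρ} > S_ρ²`, and the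
minimal constrained AMSE is `≥ λ²/(1−ρ)² + γ²` iff `|λ| ≤ λ₀`. -/
theorem stmt_14 (m : ℕ) (hm : 2 ≤ m) (γ ρ lam : ℝ) (hγ : 0 < γ) (hρ : ρ < 0)
    (c d : Fin m → ℝ) (hc : ∀ j, 0 < c j) (hd : ∀ j, 0 < d j)
    (hnorm : ∑ j, d j / c j = ∑ j, 1 / c j) (hd1 : ¬ ∀ j, d j = 1) :
    let S : ℝ → ℝ := fun α => ∑ j, d j ^ α / c j
    let B : Fin m → ℝ := fun j => lam / (1 - ρ) * d j ^ ρ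
    let V : Matrix (Fin m) (Fin m) ℝ := (γ ^ 2 * ∑ i, 1 / c i) • Matrix.diagonal c
    let one : Fin m → ℝ := fun _ => 1
    let D : ℝ := (1 + B ⬝ᵥ V⁻¹.mulVec B) * (one ⬝ᵥ V⁻¹.mulVec one) - (one ⬝ᵥ V⁻¹.mulVec B) ^ 2
    let minAMSE : ℝ := (1 + B ⬝ᵥ V⁻¹.mulVec B) / D
    let lam₀ : ℝ := γ * (1 - ρ) * Real.sqrt ((S ρ ^ 2 - S 0 ^ 2) / (S 0 * S (2 * ρ) - S ρ ^ 2))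
    S 0 ^ 2 < S ρ ^ 2 ∧
    S ρ ^ 2 < S 0 * S (2 * ρ) ∧
    (lam ^ 2 / (1 - ρ) ^ 2 + γ ^ 2 ≤ minAMSE ↔ |lam| ≤ lam₀) :=
  stmt_14_general m γ ρ lam hγ hρ c d hc hd hnorm hd1
end
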